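/- Uniqueness of the minimizer in the JKO scheme: if F : P₂(H) → [0,+∞] is strongly displacement convex and weakly lower semicontinuous with F not identically +∞, then for every τ > 0 and μ ∈ P₂(H) the functional ν ↦ F(ν) + (1/2τ)W₂²(ν,μ) has at most one minimizer. -/

import Mathlib

/-!
If `ν₁ ≠ ν₂` both minimize `J = F + W₂²(·, μ)/(2τ)`, strong displacement convexity at `t = 1/2`
produces `σ` with `J σ + W₂²(ν₁, ν₂)/(8τ) ≤ (J ν₁ + J ν₂)/2 = min J`. The minimum is finite because
`F` is finite somewhere, so `W₂²(ν₁, ν₂) = 0`. To conclude `ν₁ = ν₂`, pass to the linear transport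
cost `W₁`: the inequality `d ≤ η + d²/η` turns couplings of small quadratic cost into couplings of
small linear cost. When `W₁ = 0`, the two measures give the same integral to every Lipschitz
function. This holds in particular for the thickened indicators of a closed set, so the measures
agree on closed sets.
-/

open MeasureTheory ENNReal Filter Topology Pointwise
open scoped Classical

noncomputable section

variable {H : Type*} [NormedAddCommGroup H] [InnerProductSpace ℝ H]
  [CompleteSpace H] [SecondCountableTopology H] [MeasurableSpace H] [BorelSpace H]

/-- A coupling of `μ` and `ν`: a measure on `H × H` with marginals `μ` and `ν`. -/
def IsCoupling (P : Measure (H × H)) (μ ν : Measure H) : Prop :=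
  P.map Prod.fst = μ ∧ P.map Prod.snd = ν

/-- Squared 2-Wasserstein distance, as an infimum of quadratic transport costs. -/
noncomputable def W2sq (μ ν : Measure H) : ℝ≥0∞ :=
  ⨅ (P : Measure (H × H)) (_ : IsCoupling P μ ν),
    ∫⁻ p, ENNReal.ofReal (‖p.1 - p.2‖ ^ 2) ∂P

/-- Finite second moment. -/
def HasFiniteSecondMoment (μ : Measure H) : Prop :=
  ∫⁻ x, ENNReal.ofReal (‖x‖ ^ 2) ∂μ < ⊤

/-- Membership in the Wasserstein space `P₂(H)`. -/
def MemP2 (μ : Measure H) : Prop :=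
  IsProbabilityMeasure μ ∧ HasFiniteSecondMoment μ

/-- Weak convergence of measures, in duality with bounded continuous functions. -/
def WeakConv (μs : ℕ → Measure H) (μ : Measure H) : Prop :=
  ∀ f : BoundedContinuousFunction H ℝ,
    Tendsto (fun n => ∫ x, f x ∂(μs n)) atTop (𝓝 (∫ x, f x ∂μ))

/-- Relative entropy `H(μ|γ) = ∫ ρ log ρ dγ` if `μ = ργ`, `+∞` otherwise (for probability
measures the integrand satisfies `ρ log ρ + e⁻¹ ≥ 0`, so we compute via `lintegral`). -/
noncomputable def relEnt (μ γ : Measure H) : ℝ≥0∞ :=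
  if μ ≪ γ then
    (∫⁻ x, ENNReal.ofReal ((μ.rnDeriv γ x).toReal * Real.log (μ.rnDeriv γ x).toReal
        + Real.exp (-1)) ∂γ) - ENNReal.ofReal (Real.exp (-1))
  else ⊤

/-- Strong displacement convexity of a functional on `P₂(H)`: for every base point `μbar`
and endpoints `ν₀, ν₁` there is a connecting curve, continuous in the Wasserstein distance,
along which `W₂²(·, μbar)` is convex with modulus `t(1−t)W₂²(ν₀,ν₁)` and `F` is convex. -/
def StronglyDisplacementConvex (F : Measure H → ℝ≥0∞) : Prop :=
  ∀ μbar ν₀ ν₁ : Measure H, MemP2 μbar → MemP2 ν₀ → MemP2 ν₁ →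
    ∃ ν : ℝ → Measure H,
      (∀ t ∈ Set.Icc (0:ℝ) 1, MemP2 (ν t)) ∧ ν 0 = ν₀ ∧ ν 1 = ν₁ ∧
      (∀ t₀ ∈ Set.Icc (0:ℝ) 1,
        Tendsto (fun t => W2sq (ν t) (ν t₀)) (𝓝[Set.Icc (0:ℝ) 1] t₀) (𝓝 0)) ∧
      (∀ t ∈ Set.Icc (0:ℝ) 1,
        W2sq (ν t) μbar + ENNReal.ofReal (t * (1 - t)) * W2sq ν₀ ν₁ ≤
          ENNReal.ofReal (1 - t) * W2sq ν₀ μbar + ENNReal.ofReal t * W2sq ν₁ μbar) ∧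
      (∀ t ∈ Set.Icc (0:ℝ) 1,
        F (ν t) ≤ ENNReal.ofReal (1 - t) * F ν₀ + ENNReal.ofReal t * F ν₁)

/-- Sequential lower semicontinuity of `F` with respect to weak convergence. -/
def WeaklySeqLSC (F : Measure H → ℝ≥0∞) : Prop :=
  ∀ (μs : ℕ → Measure H) (μ : Measure H), (∀ n, MemP2 (μs n)) → MemP2 μ →
    WeakConv μs μ → F μ ≤ liminf (fun n => F (μs n)) atTop

section Transport

variable {X : Type*} [PseudoEMetricSpace X] [MeasurableSpace X]

def W1 (μ ν : Measure X) : ℝ≥0∞ :=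
  ⨅ (P : Measure (X × X)) (_ : P.map Prod.fst = μ ∧ P.map Prod.snd = ν), ∫⁻ p, edist p.1 p.2 ∂P

lemma W1_comm (μ ν : Measure X) : W1 μ ν = W1 ν μ := by
  have hle (μ ν : Measure X) : W1 ν μ ≤ W1 μ ν := by
    refine le_iInf₂ fun P hP => ?_
    have hswap : (P.map Prod.swap).map Prod.fst = ν ∧ (P.map Prod.swap).map Prod.snd = μ := by
      rw [Measure.map_map measurable_fst measurable_swap,
        Measure.map_map measurable_snd measurable_swap]
      exact hP.symm
    calc W1 ν μ ≤ ∫⁻ p, edist p.1 p.2 ∂(P.map Prod.swap) := iInf₂_le (P.map Prod.swap) hswap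
      _ = ∫⁻ p, edist p.1 p.2 ∂P :=
        (lintegral_map_equiv (fun p : X × X => edist p.1 p.2) MeasurableEquiv.prodComm).trans
          (lintegral_congr fun p => edist_comm _ _)
  exact le_antisymm (hle ν μ) (hle μ ν)

variable [OpensMeasurableSpace X]

lemma LipschitzWith.lintegral_le_add_mul_lintegral_edist {K : NNReal} {f : X → NNReal}
    (hf : LipschitzWith K f) {μ ν : Measure X} {P : Measure (X × X)}
    (hP : P.map Prod.fst = μ ∧ P.map Prod.snd = ν) :
    ∫⁻ x, f x ∂μ ≤ ∫⁻ x, f x ∂ν + K * ∫⁻ p, edist p.1 p.2 ∂P := by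
  have hmeas : Measurable fun x => (f x : ℝ≥0∞) :=
    measurable_coe_nnreal_ennreal.comp hf.continuous.measurable
  have hpt (x y : X) : (f x : ℝ≥0∞) ≤ f y + K * edist x y := by
    calc (f x : ℝ≥0∞) ≤ ((f y + nndist (f x) (f y) : NNReal) : ℝ≥0∞) :=
          ENNReal.coe_le_coe.mpr (NNReal.le_add_nndist _ _)
      _ = f y + edist (f x) (f y) := by rw [ENNReal.coe_add, edist_nndist]
      _ ≤ f y + K * edist x y := by gcongr; exact hf x y
  rw [← hP.1, ← hP.2, lintegral_map hmeas measurable_fst, lintegral_map hmeas measurable_snd,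
    ← lintegral_const_mul' _ _ ENNReal.coe_ne_top,
    ← lintegral_add_left (f := fun p : X × X => (f p.2 : ℝ≥0∞)) (hmeas.comp measurable_snd)]
  exact lintegral_mono fun p => hpt p.1 p.2

lemma LipschitzWith.lintegral_le_of_W1_eq_zero {K : NNReal} {f : X → NNReal}
    (hf : LipschitzWith K f) {μ ν : Measure X} (h : W1 μ ν = 0) :
    ∫⁻ x, f x ∂μ ≤ ∫⁻ x, f x ∂ν := by
  refine ENNReal.le_of_forall_pos_le_add fun ε hε _ => ?_
  have hpos : W1 μ ν < ε / K := by
    rw [h]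
    exact ENNReal.div_pos (by exact_mod_cast hε.ne') ENNReal.coe_ne_top
  obtain ⟨P, hP, hcost⟩ : ∃ P : Measure (X × X), (P.map Prod.fst = μ ∧ P.map Prod.snd = ν) ∧
      ∫⁻ p, edist p.1 p.2 ∂P < ε / K := by
    simpa only [W1, iInf_lt_iff, exists_prop] using hpos
  calc ∫⁻ x, f x ∂μ ≤ ∫⁻ x, f x ∂ν + K * ∫⁻ p, edist p.1 p.2 ∂P :=
        hf.lintegral_le_add_mul_lintegral_edist hP
    _ ≤ ∫⁻ x, f x ∂ν + K * (ε / K) := by gcongr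
    _ ≤ ∫⁻ x, f x ∂ν + ε := by gcongr; exact ENNReal.mul_div_le

lemma eq_of_W1_eq_zero [BorelSpace X] {μ ν : Measure X} [IsFiniteMeasure μ] [IsFiniteMeasure ν]
    (h : W1 μ ν = 0) : μ = ν := by
  have hclosed {E : Set X} (hE : IsClosed E) : μ E = ν E := by
    have hδ (n : ℕ) : (0 : ℝ) < 1 / (n + 1) := Nat.one_div_pos_of_nat
    have hint (n : ℕ) : ∫⁻ x, thickenedIndicator (hδ n) E x ∂μ =
        ∫⁻ x, thickenedIndicator (hδ n) E x ∂ν :=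
      le_antisymm ((lipschitzWith_thickenedIndicator (hδ n) E).lintegral_le_of_W1_eq_zero h)
        ((lipschitzWith_thickenedIndicator (hδ n) E).lintegral_le_of_W1_eq_zero
          (W1_comm μ ν ▸ h))
    have hμ := tendsto_lintegral_thickenedIndicator_of_isClosed μ hE hδ
      tendsto_one_div_add_atTop_nhds_zero_nat
    simp_rw [hint] at hμ
    exact tendsto_nhds_unique hμ (tendsto_lintegral_thickenedIndicator_of_isClosed ν hE hδ
      tendsto_one_div_add_atTop_nhds_zero_nat)
  refine ext_of_generate_finite _ ?_ isPiSystem_isClosed (fun E hE => hclosed hE)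
    (hclosed isClosed_univ)
  rw [BorelSpace.measurable_eq (α := X), borel_eq_generateFrom_isClosed]

end Transport

lemma ENNReal.le_add_inv_mul_sq {a : ℝ≥0∞} (η : ℝ≥0∞) (ha : a ≠ ⊤) :
    a ≤ η + η⁻¹ * a ^ 2 := by
  rcases le_or_gt a η with hle | hlt
  · exact le_add_right hle
  · have ha0 : a ≠ 0 := (hlt.trans_le' zero_le).ne'
    calc a = a⁻¹ * a ^ 2 := by rw [sq, ← mul_assoc, ENNReal.inv_mul_cancel ha0 ha, one_mul]
      _ ≤ η⁻¹ * a ^ 2 := by gcongr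
      _ ≤ η + η⁻¹ * a ^ 2 := le_add_self

lemma edist_sq_eq_ofReal_norm_sub_sq {F : Type*} [SeminormedAddCommGroup F] (x y : F) :
    edist x y ^ 2 = ENNReal.ofReal (‖x - y‖ ^ 2) := by
  rw [edist_dist, dist_eq_norm, ENNReal.ofReal_pow (norm_nonneg _)]

lemma ofReal_norm_sub_sq_le {F : Type*} [SeminormedAddCommGroup F] (x y : F) :
    ENNReal.ofReal (‖x - y‖ ^ 2) ≤ 2 * ENNReal.ofReal (‖x‖ ^ 2) + 2 * ENNReal.ofReal (‖y‖ ^ 2) := by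
  rw [← ENNReal.ofReal_ofNat 2, ← ENNReal.ofReal_mul zero_le_two, ← ENNReal.ofReal_mul zero_le_two,
    ← ENNReal.ofReal_add (by positivity) (by positivity)]
  apply ENNReal.ofReal_le_ofReal
  nlinarith [norm_sub_le x y, norm_nonneg (x - y), sq_nonneg (‖x‖ - ‖y‖)]

lemma isCoupling_prod {X : Type*} [MeasurableSpace X] (μ ν : Measure X) [IsProbabilityMeasure μ]
    [IsProbabilityMeasure ν] :
    IsCoupling (μ.prod ν) μ ν := by
  simp [IsCoupling]

section Wasserstein

variable {E : Type*} [NormedAddCommGroup E] [MeasurableSpace E]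

lemma lintegral_ofReal_norm_sub_sq_le [OpensMeasurableSpace E] {P : Measure (E × E)}
    {μ ν : Measure E} (hP : IsCoupling P μ ν) :
    ∫⁻ p, ENNReal.ofReal (‖p.1 - p.2‖ ^ 2) ∂P ≤
      2 * ∫⁻ x, ENNReal.ofReal (‖x‖ ^ 2) ∂μ + 2 * ∫⁻ x, ENNReal.ofReal (‖x‖ ^ 2) ∂ν := by
  have hm : Measurable fun x : E => ENNReal.ofReal (‖x‖ ^ 2) := by fun_prop
  calc ∫⁻ p, ENNReal.ofReal (‖p.1 - p.2‖ ^ 2) ∂P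
      ≤ ∫⁻ p, (2 * ENNReal.ofReal (‖p.1‖ ^ 2) + 2 * ENNReal.ofReal (‖p.2‖ ^ 2)) ∂P :=
        lintegral_mono fun p => ofReal_norm_sub_sq_le p.1 p.2
    _ = 2 * ∫⁻ x, ENNReal.ofReal (‖x‖ ^ 2) ∂μ + 2 * ∫⁻ x, ENNReal.ofReal (‖x‖ ^ 2) ∂ν := by
        rw [lintegral_add_left (by fun_prop), lintegral_const_mul _ (by fun_prop),
          lintegral_const_mul _ (by fun_prop), ← hP.1, ← hP.2, lintegral_map hm measurable_fst,
          lintegral_map hm measurable_snd]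

lemma W2sq_lt_top [OpensMeasurableSpace E] {μ ν : Measure E} (hμ : MemP2 μ) (hν : MemP2 ν) :
    W2sq μ ν < ⊤ := by
  obtain ⟨hμ1, hμ2 : ∫⁻ x, ENNReal.ofReal (‖x‖ ^ 2) ∂μ < ⊤⟩ := hμ
  obtain ⟨hν1, hν2 : ∫⁻ x, ENNReal.ofReal (‖x‖ ^ 2) ∂ν < ⊤⟩ := hν
  calc W2sq μ ν ≤ ∫⁻ p, ENNReal.ofReal (‖p.1 - p.2‖ ^ 2) ∂(μ.prod ν) :=
        iInf₂_le (μ.prod ν) (isCoupling_prod μ ν)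
    _ ≤ 2 * ∫⁻ x, ENNReal.ofReal (‖x‖ ^ 2) ∂μ + 2 * ∫⁻ x, ENNReal.ofReal (‖x‖ ^ 2) ∂ν :=
        lintegral_ofReal_norm_sub_sq_le (isCoupling_prod μ ν)
    _ < ⊤ := by finiteness

lemma lintegral_edist_le_add_inv_mul {P : Measure (E × E)} [IsProbabilityMeasure P]
    {η : ℝ≥0∞} (hη : η ≠ 0) :
    ∫⁻ p, edist p.1 p.2 ∂P ≤ η + η⁻¹ * ∫⁻ p, ENNReal.ofReal (‖p.1 - p.2‖ ^ 2) ∂P := by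
  calc ∫⁻ p, edist p.1 p.2 ∂P ≤ ∫⁻ p, (η + η⁻¹ * edist p.1 p.2 ^ 2) ∂P :=
        lintegral_mono fun p => ENNReal.le_add_inv_mul_sq η (edist_ne_top _ _)
    _ = η + η⁻¹ * ∫⁻ p, ENNReal.ofReal (‖p.1 - p.2‖ ^ 2) ∂P := by
        simp_rw [edist_sq_eq_ofReal_norm_sub_sq]
        rw [lintegral_add_left measurable_const, lintegral_const, measure_univ, mul_one,
          lintegral_const_mul' _ _ (ENNReal.inv_ne_top.mpr hη)]

lemma W1_eq_zero_of_W2sq_eq_zero {μ ν : Measure E} [IsProbabilityMeasure μ]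
    (h : W2sq μ ν = 0) : W1 μ ν = 0 := by
  refine nonpos_iff_eq_zero.mp (ENNReal.le_of_forall_pos_le_add fun ε hε _ => ?_)
  set η : ℝ≥0∞ := ε / 2
  have hη : η ≠ 0 := ENNReal.div_ne_zero.mpr ⟨by exact_mod_cast hε.ne', ENNReal.ofNat_ne_top⟩
  have hηtop : η ≠ ⊤ := ENNReal.div_ne_top ENNReal.coe_ne_top two_ne_zero
  obtain ⟨P, hP, hcost⟩ : ∃ P : Measure (E × E), IsCoupling P μ ν ∧
      ∫⁻ p, ENNReal.ofReal (‖p.1 - p.2‖ ^ 2) ∂P < η * η := by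
    have : W2sq μ ν < η * η := h ▸ ENNReal.mul_pos hη hη
    simpa only [W2sq, iInf_lt_iff, exists_prop] using this
  have : IsProbabilityMeasure (P.map Prod.fst) := hP.1 ▸ ‹_›
  have : IsProbabilityMeasure P := Measure.isProbabilityMeasure_of_map Prod.fst
  calc W1 μ ν ≤ ∫⁻ p, edist p.1 p.2 ∂P := iInf₂_le P hP
    _ ≤ η + η⁻¹ * (η * η) := by
        grw [lintegral_edist_le_add_inv_mul hη, hcost]
    _ = 0 + ε := by
        rw [← mul_assoc, ENNReal.inv_mul_cancel hη hηtop, one_mul, ENNReal.add_halves, zero_add]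

lemma eq_of_W2sq_eq_zero [BorelSpace E] {μ ν : Measure E} [IsProbabilityMeasure μ]
    [IsProbabilityMeasure ν] (h : W2sq μ ν = 0) : μ = ν :=
  eq_of_W1_eq_zero (W1_eq_zero_of_W2sq_eq_zero h)

def jkoFunctional (F : Measure E → ℝ≥0∞) (τ : ℝ) (μ σ : Measure E) : ℝ≥0∞ :=
  F σ + (ENNReal.ofReal (2 * τ))⁻¹ * W2sq σ μ

lemma StronglyDisplacementConvex.exists_jkoFunctional_add_le {F : Measure E → ℝ≥0∞}
    (hF : StronglyDisplacementConvex F) (τ : ℝ) {μ ν₀ ν₁ : Measure E} (hμ : MemP2 μ)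
    (hν₀ : MemP2 ν₀) (hν₁ : MemP2 ν₁) {t : ℝ} (ht : t ∈ Set.Icc (0 : ℝ) 1) :
    ∃ σ, MemP2 σ ∧
      jkoFunctional F τ μ σ +
          (ENNReal.ofReal (2 * τ))⁻¹ * (ENNReal.ofReal (t * (1 - t)) * W2sq ν₀ ν₁) ≤
        ENNReal.ofReal (1 - t) * jkoFunctional F τ μ ν₀ +
          ENNReal.ofReal t * jkoFunctional F τ μ ν₁ := by
  obtain ⟨ν, hmem, rfl, rfl, -, hW, hFν⟩ := hF μ ν₀ ν₁ hμ hν₀ hν₁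
  refine ⟨ν t, hmem t ht, ?_⟩
  set c := (ENNReal.ofReal (2 * τ))⁻¹
  calc jkoFunctional F τ μ (ν t) + c * (ENNReal.ofReal (t * (1 - t)) * W2sq (ν 0) (ν 1))
      = F (ν t) + c * (W2sq (ν t) μ + ENNReal.ofReal (t * (1 - t)) * W2sq (ν 0) (ν 1)) := by
        rw [jkoFunctional, mul_add, add_assoc]
    _ ≤ (ENNReal.ofReal (1 - t) * F (ν 0) + ENNReal.ofReal t * F (ν 1)) +
          c * (ENNReal.ofReal (1 - t) * W2sq (ν 0) μ + ENNReal.ofReal t * W2sq (ν 1) μ) :=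
        add_le_add (hFν t ht) (mul_le_mul_right (hW t ht) c)
    _ = _ := by simp only [jkoFunctional]; ring

end Wasserstein

theorem jko_minimizer_unique_general (F : Measure H → ℝ≥0∞)
    (hF : StronglyDisplacementConvex F)
    (hne : ∃ μ : Measure H, MemP2 μ ∧ F μ < ⊤)
    (τ : ℝ) (hτ : 0 < τ) (μ : Measure H) (hμ : MemP2 μ) :
    ∀ ν₁ ν₂ : Measure H, MemP2 ν₁ → MemP2 ν₂ →
      (∀ σ : Measure H, MemP2 σ →
        F ν₁ + (ENNReal.ofReal (2 * τ))⁻¹ * W2sq ν₁ μ ≤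
          F σ + (ENNReal.ofReal (2 * τ))⁻¹ * W2sq σ μ) →
      (∀ σ : Measure H, MemP2 σ →
        F ν₂ + (ENNReal.ofReal (2 * τ))⁻¹ * W2sq ν₂ μ ≤
          F σ + (ENNReal.ofReal (2 * τ))⁻¹ * W2sq σ μ) →
      ν₁ = ν₂ := by
  intro ν₁ ν₂ hν₁ hν₂ hmin₁ hmin₂
  set J := jkoFunctional F τ μ
  set c := (ENNReal.ofReal (2 * τ))⁻¹
  have hJ₂ : J ν₂ = J ν₁ := le_antisymm (hmin₂ ν₁ hν₁) (hmin₁ ν₂ hν₂)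
  have hJ₁ : J ν₁ ≠ ⊤ := by
    obtain ⟨μ₀, hμ₀, hFμ₀⟩ := hne
    have hc : c ≠ ⊤ := by simpa [c] using hτ
    exact ne_top_of_le_ne_top (by finiteness [W2sq_lt_top hμ₀ hμ]) (hmin₁ μ₀ hμ₀)
  obtain ⟨σ, hσ, hmid⟩ := hF.exists_jkoFunctional_add_le τ hμ hν₁ hν₂
    (t := 1 / 2) (by norm_num)
  have hgap : J ν₁ + c * (ENNReal.ofReal (1 / 4) * W2sq ν₁ ν₂) ≤ J ν₁ + 0 :=
    calc _ ≤ J σ + c * (ENNReal.ofReal (1 / 4) * W2sq ν₁ ν₂) := by gcongr; exact hmin₁ σ hσ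
      _ ≤ ENNReal.ofReal (1 / 2) * J ν₁ + ENNReal.ofReal (1 / 2) * J ν₂ := by
          convert hmid using 3 <;> norm_num
      _ = J ν₁ + 0 := by
          rw [hJ₂, ← add_mul, ← ENNReal.ofReal_add (by norm_num) (by norm_num)]
          norm_num
  have hW : W2sq ν₁ ν₂ = 0 := by
    simpa [c, hτ.le, ENNReal.mul_eq_top] using (ENNReal.add_le_add_iff_left hJ₁).mp hgap
  have := hν₁.1
  have := hν₂.1
  exact eq_of_W2sq_eq_zero hW

/-- Uniqueness of the minimizer in the JKO scheme for a strongly displacement convex,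
weakly lower semicontinuous functional which is not identically `+∞` on `P₂(H)`. -/
theorem jko_minimizer_unique (F : Measure H → ℝ≥0∞)
    (hF : StronglyDisplacementConvex F) (hlsc : WeaklySeqLSC F)
    (hne : ∃ μ : Measure H, MemP2 μ ∧ F μ < ⊤)
    (τ : ℝ) (hτ : 0 < τ) (μ : Measure H) (hμ : MemP2 μ) :
    ∀ ν₁ ν₂ : Measure H, MemP2 ν₁ → MemP2 ν₂ →
      (∀ σ : Measure H, MemP2 σ →
        F ν₁ + (ENNReal.ofReal (2 * τ))⁻¹ * W2sq ν₁ μ ≤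
          F σ + (ENNReal.ofReal (2 * τ))⁻¹ * W2sq σ μ) →
      (∀ σ : Measure H, MemP2 σ →
        F ν₂ + (ENNReal.ofReal (2 * τ))⁻¹ * W2sq ν₂ μ ≤
          F σ + (ENNReal.ofReal (2 * τ))⁻¹ * W2sq σ μ) →
      ν₁ = ν₂ :=
  jko_minimizer_unique_general F hF hne τ hτ μ hμ
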